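/- arXiv:2208.04913 — 4 statements merged into one kernel-verified Lean document; each statement's English description precedes it below -/
import Mathlib

section
/- On ℍ¹ with X₁ = ∂_{x₁} + 2x₂ ∂_t and X₂ = ∂_{x₂} - 2x₁ ∂_t, the function u(x₁,x₂,t) = ((x₁²+x₂²)² + t²)^{-1/2} satisfies the sub-Laplace equation X₁²u + X₂²u = 0 at every point (x₁,x₂,t) ≠ (0,0,0). -/
/-!
Write `ρ = N⁴ = (x₁² + x₂²)² + t²`. Since `X₁` and `X₂` are derivations, for every real `p`
`ℒ(ρ^p) = p (p - 1) ρ^(p-2) ((X₁ρ)² + (X₂ρ)²) + p ρ^(p-1) ℒρ`. A direct computation gives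
`(X₁ρ)² + (X₂ρ)² = 16 (x₁² + x₂²) ρ` and `X₁²ρ = X₂²ρ = 12 (x₁² + x₂²)`, hence
`ℒ(ρ^p) = 8 p (2p + 1) (x₁² + x₂²) ρ^(p-1)`, which vanishes for `p = -1/2`.
-/

/-- The horizontal vector field `X₁ = ∂_{x₁} + 2x₂ ∂_t` on the first Heisenberg group. -/
noncomputable def X1 (f : ℝ → ℝ → ℝ → ℝ) : ℝ → ℝ → ℝ → ℝ :=
  fun x₁ x₂ t => deriv (fun a => f a x₂ t) x₁ + 2 * x₂ * deriv (fun a => f x₁ x₂ a) t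

/-- The horizontal vector field `X₂ = ∂_{x₂} - 2x₁ ∂_t` on the first Heisenberg group. -/
noncomputable def X2 (f : ℝ → ℝ → ℝ → ℝ) : ℝ → ℝ → ℝ → ℝ :=
  fun x₁ x₂ t => deriv (fun a => f x₁ a t) x₂ - 2 * x₁ * deriv (fun a => f x₁ x₂ a) t

open Topology

noncomputable def subLaplacian (f : ℝ → ℝ → ℝ → ℝ) : ℝ → ℝ → ℝ → ℝ :=
  fun x₁ x₂ t => X1 (X1 f) x₁ x₂ t + X2 (X2 f) x₁ x₂ t

section LeibnizRules

variable {f g : ℝ → ℝ → ℝ → ℝ} {x₁ x₂ t : ℝ}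

theorem X1_congr (h₁ : (fun a => f a x₂ t) =ᶠ[𝓝 x₁] fun a => g a x₂ t)
    (h₃ : (fun c => f x₁ x₂ c) =ᶠ[𝓝 t] fun c => g x₁ x₂ c) :
    X1 f x₁ x₂ t = X1 g x₁ x₂ t := by
  simp only [X1, h₁.deriv_eq, h₃.deriv_eq]

theorem X2_congr (h₂ : (fun b => f x₁ b t) =ᶠ[𝓝 x₂] fun b => g x₁ b t)
    (h₃ : (fun c => f x₁ x₂ c) =ᶠ[𝓝 t] fun c => g x₁ x₂ c) :
    X2 f x₁ x₂ t = X2 g x₁ x₂ t := by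
  simp only [X2, h₂.deriv_eq, h₃.deriv_eq]

theorem X1_mul (hf₁ : DifferentiableAt ℝ (fun a => f a x₂ t) x₁)
    (hf₃ : DifferentiableAt ℝ (fun c => f x₁ x₂ c) t)
    (hg₁ : DifferentiableAt ℝ (fun a => g a x₂ t) x₁)
    (hg₃ : DifferentiableAt ℝ (fun c => g x₁ x₂ c) t) :
    X1 (fun a b c => f a b c * g a b c) x₁ x₂ t =
      X1 f x₁ x₂ t * g x₁ x₂ t + f x₁ x₂ t * X1 g x₁ x₂ t := by
  simp only [X1, deriv_fun_mul hf₁ hg₁, deriv_fun_mul hf₃ hg₃]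
  ring

theorem X2_mul (hf₂ : DifferentiableAt ℝ (fun b => f x₁ b t) x₂)
    (hf₃ : DifferentiableAt ℝ (fun c => f x₁ x₂ c) t)
    (hg₂ : DifferentiableAt ℝ (fun b => g x₁ b t) x₂)
    (hg₃ : DifferentiableAt ℝ (fun c => g x₁ x₂ c) t) :
    X2 (fun a b c => f a b c * g a b c) x₁ x₂ t =
      X2 f x₁ x₂ t * g x₁ x₂ t + f x₁ x₂ t * X2 g x₁ x₂ t := by
  simp only [X2, deriv_fun_mul hf₂ hg₂, deriv_fun_mul hf₃ hg₃]
  ring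

theorem X1_comp {φ : ℝ → ℝ} {φ' : ℝ} (hφ : HasDerivAt φ φ' (g x₁ x₂ t))
    (hg₁ : DifferentiableAt ℝ (fun a => g a x₂ t) x₁)
    (hg₃ : DifferentiableAt ℝ (fun c => g x₁ x₂ c) t) :
    X1 (fun a b c => φ (g a b c)) x₁ x₂ t = φ' * X1 g x₁ x₂ t := by
  have h₁ : deriv (fun a => φ (g a x₂ t)) x₁ = φ' * deriv (fun a => g a x₂ t) x₁ :=
    (hφ.comp x₁ hg₁.hasDerivAt).deriv
  have h₃ : deriv (fun c => φ (g x₁ x₂ c)) t = φ' * deriv (fun c => g x₁ x₂ c) t :=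
    (hφ.comp t hg₃.hasDerivAt).deriv
  simp only [X1, h₁, h₃]
  ring

theorem X2_comp {φ : ℝ → ℝ} {φ' : ℝ} (hφ : HasDerivAt φ φ' (g x₁ x₂ t))
    (hg₂ : DifferentiableAt ℝ (fun b => g x₁ b t) x₂)
    (hg₃ : DifferentiableAt ℝ (fun c => g x₁ x₂ c) t) :
    X2 (fun a b c => φ (g a b c)) x₁ x₂ t = φ' * X2 g x₁ x₂ t := by
  have h₂ : deriv (fun b => φ (g x₁ b t)) x₂ = φ' * deriv (fun b => g x₁ b t) x₂ :=
    (hφ.comp x₂ hg₂.hasDerivAt).deriv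
  have h₃ : deriv (fun c => φ (g x₁ x₂ c)) t = φ' * deriv (fun c => g x₁ x₂ c) t :=
    (hφ.comp t hg₃.hasDerivAt).deriv
  simp only [X2, h₂, h₃]
  ring

end LeibnizRules

theorem hasDerivAt_const_mul_rpow_sub_one {s : ℝ} (p : ℝ) (hs : s ≠ 0) :
    HasDerivAt (fun s => p * s ^ (p - 1)) (p * ((p - 1) * s ^ (p - 2))) s := by
  rw [show p - 2 = p - 1 - 1 by ring]
  exact (Real.hasDerivAt_rpow_const (Or.inl hs)).const_mul p

/-- The fourth power `N⁴` of the Korányi norm `N`. -/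
def koranyiGauge (x₁ x₂ t : ℝ) : ℝ := (x₁ ^ 2 + x₂ ^ 2) ^ 2 + t ^ 2

section KoranyiGauge

variable {x₁ x₂ t : ℝ}

theorem koranyiGauge_pos (h : ¬(x₁ = 0 ∧ x₂ = 0 ∧ t = 0)) : 0 < koranyiGauge x₁ x₂ t := by
  contrapose! h
  have h0 : (x₁ ^ 2 + x₂ ^ 2) ^ 2 + t ^ 2 = 0 := le_antisymm h (by positivity)
  simp only [add_eq_zero_iff_of_nonneg, sq_nonneg, ne_eq, OfNat.ofNat_ne_zero, not_false_eq_true,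
    pow_eq_zero_iff] at h0
  tauto

theorem differentiable_koranyiGauge₁ : Differentiable ℝ fun a => koranyiGauge a x₂ t := by
  unfold koranyiGauge; fun_prop

theorem differentiable_koranyiGauge₂ : Differentiable ℝ fun b => koranyiGauge x₁ b t := by
  unfold koranyiGauge; fun_prop

theorem differentiable_koranyiGauge₃ : Differentiable ℝ fun c => koranyiGauge x₁ x₂ c := by
  unfold koranyiGauge; fun_prop

theorem X1_koranyiGauge :
    X1 koranyiGauge = fun x₁ x₂ t => 4 * (x₁ * (x₁ ^ 2 + x₂ ^ 2) + x₂ * t) := by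
  funext x₁ x₂ t
  simp only [X1, koranyiGauge, deriv_add_const', differentiableAt_add_const_iff,
    differentiableAt_fun_id, DifferentiableAt.fun_pow, deriv_fun_pow, Nat.cast_ofNat,
    Nat.add_one_sub_one, pow_one, differentiableAt_const, deriv_fun_add, deriv_id'', mul_one,
    deriv_const', mul_zero, add_zero, zero_add]
  ring

theorem X2_koranyiGauge :
    X2 koranyiGauge = fun x₁ x₂ t => 4 * (x₂ * (x₁ ^ 2 + x₂ ^ 2) - x₁ * t) := by
  funext x₁ x₂ t
  simp only [X2, koranyiGauge, deriv_add_const', differentiableAt_const,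
    differentiableAt_const_add_iff, differentiableAt_fun_id, DifferentiableAt.fun_pow,
    deriv_fun_pow, Nat.cast_ofNat, Nat.add_one_sub_one, pow_one, deriv_fun_add, deriv_const',
    mul_zero, deriv_id'', mul_one, zero_add, add_zero]
  ring

theorem X1_X1_koranyiGauge : X1 (X1 koranyiGauge) x₁ x₂ t = 12 * (x₁ ^ 2 + x₂ ^ 2) := by
  rw [X1_koranyiGauge]
  simp only [X1, differentiableAt_const, deriv_const_mul_field', deriv_add_const',
    differentiableAt_fun_id, differentiableAt_add_const_iff, DifferentiableAt.fun_pow,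
    deriv_fun_mul, deriv_id'', one_mul, deriv_fun_add, deriv_fun_pow, Nat.cast_ofNat,
    Nat.add_one_sub_one, pow_one, mul_one, deriv_const', mul_zero, add_zero, deriv_const_add',
    deriv_const_mul_id']
  ring

theorem X2_X2_koranyiGauge : X2 (X2 koranyiGauge) x₁ x₂ t = 12 * (x₁ ^ 2 + x₂ ^ 2) := by
  rw [X2_koranyiGauge]
  simp only [X2, differentiableAt_const, deriv_const_mul_field', deriv_sub_const_fun,
    differentiableAt_fun_id, differentiableAt_const_add_iff, DifferentiableAt.fun_pow,
    deriv_fun_mul, deriv_id'', one_mul, deriv_fun_add, deriv_fun_pow, Nat.cast_ofNat,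
    Nat.add_one_sub_one, pow_one, deriv_const', mul_zero, mul_one, zero_add, deriv_const_sub',
    deriv_const_mul_id', mul_neg, sub_neg_eq_add]
  ring

theorem X1_koranyiGauge_sq_add_X2_koranyiGauge_sq :
    X1 koranyiGauge x₁ x₂ t ^ 2 + X2 koranyiGauge x₁ x₂ t ^ 2 =
      16 * (x₁ ^ 2 + x₂ ^ 2) * koranyiGauge x₁ x₂ t := by
  rw [X1_koranyiGauge, X2_koranyiGauge, koranyiGauge]
  ring

theorem X1_koranyiGauge_rpow (p : ℝ) (h : 0 < koranyiGauge x₁ x₂ t) :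
    X1 (fun a b c => koranyiGauge a b c ^ p) x₁ x₂ t =
      p * koranyiGauge x₁ x₂ t ^ (p - 1) * X1 koranyiGauge x₁ x₂ t :=
  X1_comp (Real.hasDerivAt_rpow_const (Or.inl h.ne')) differentiable_koranyiGauge₁.differentiableAt
    differentiable_koranyiGauge₃.differentiableAt

theorem X2_koranyiGauge_rpow (p : ℝ) (h : 0 < koranyiGauge x₁ x₂ t) :
    X2 (fun a b c => koranyiGauge a b c ^ p) x₁ x₂ t =
      p * koranyiGauge x₁ x₂ t ^ (p - 1) * X2 koranyiGauge x₁ x₂ t :=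
  X2_comp (Real.hasDerivAt_rpow_const (Or.inl h.ne')) differentiable_koranyiGauge₂.differentiableAt
    differentiable_koranyiGauge₃.differentiableAt

theorem X1_X1_koranyiGauge_rpow (p : ℝ) (h : 0 < koranyiGauge x₁ x₂ t) :
    X1 (X1 fun a b c => koranyiGauge a b c ^ p) x₁ x₂ t =
      p * ((p - 1) * koranyiGauge x₁ x₂ t ^ (p - 2) * X1 koranyiGauge x₁ x₂ t ^ 2 +
        koranyiGauge x₁ x₂ t ^ (p - 1) * X1 (X1 koranyiGauge) x₁ x₂ t) := by
  have hloc : X1 (X1 fun a b c => koranyiGauge a b c ^ p) x₁ x₂ t =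
      X1 (fun a b c => p * koranyiGauge a b c ^ (p - 1) * X1 koranyiGauge a b c) x₁ x₂ t := by
    apply X1_congr
    · filter_upwards [differentiable_koranyiGauge₁.continuous.tendsto x₁ |>.eventually_const_lt h]
        with a ha using X1_koranyiGauge_rpow p ha
    · filter_upwards [differentiable_koranyiGauge₃.continuous.tendsto t |>.eventually_const_lt h]
        with c hc using X1_koranyiGauge_rpow p hc
  have hφ := hasDerivAt_const_mul_rpow_sub_one p h.ne'
  have hX1 : X1 (fun a b c => p * koranyiGauge a b c ^ (p - 1)) x₁ x₂ t =
      p * ((p - 1) * koranyiGauge x₁ x₂ t ^ (p - 2)) * X1 koranyiGauge x₁ x₂ t :=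
    X1_comp hφ differentiable_koranyiGauge₁.differentiableAt
      differentiable_koranyiGauge₃.differentiableAt
  rw [hloc, X1_mul, hX1]
  · ring
  · exact (hφ.differentiableAt.comp x₁ (differentiable_koranyiGauge₁ x₁ :) :)
  · exact (hφ.differentiableAt.comp t (differentiable_koranyiGauge₃ t :) :)
  all_goals rw [X1_koranyiGauge]; fun_prop

theorem X2_X2_koranyiGauge_rpow (p : ℝ) (h : 0 < koranyiGauge x₁ x₂ t) :
    X2 (X2 fun a b c => koranyiGauge a b c ^ p) x₁ x₂ t =
      p * ((p - 1) * koranyiGauge x₁ x₂ t ^ (p - 2) * X2 koranyiGauge x₁ x₂ t ^ 2 +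
        koranyiGauge x₁ x₂ t ^ (p - 1) * X2 (X2 koranyiGauge) x₁ x₂ t) := by
  have hloc : X2 (X2 fun a b c => koranyiGauge a b c ^ p) x₁ x₂ t =
      X2 (fun a b c => p * koranyiGauge a b c ^ (p - 1) * X2 koranyiGauge a b c) x₁ x₂ t := by
    apply X2_congr
    · filter_upwards [differentiable_koranyiGauge₂.continuous.tendsto x₂ |>.eventually_const_lt h]
        with b hb using X2_koranyiGauge_rpow p hb
    · filter_upwards [differentiable_koranyiGauge₃.continuous.tendsto t |>.eventually_const_lt h]
        with c hc using X2_koranyiGauge_rpow p hc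
  have hφ := hasDerivAt_const_mul_rpow_sub_one p h.ne'
  have hX2 : X2 (fun a b c => p * koranyiGauge a b c ^ (p - 1)) x₁ x₂ t =
      p * ((p - 1) * koranyiGauge x₁ x₂ t ^ (p - 2)) * X2 koranyiGauge x₁ x₂ t :=
    X2_comp hφ differentiable_koranyiGauge₂.differentiableAt
      differentiable_koranyiGauge₃.differentiableAt
  rw [hloc, X2_mul, hX2]
  · ring
  · exact (hφ.differentiableAt.comp x₂ (differentiable_koranyiGauge₂ x₂ :) :)
  · exact (hφ.differentiableAt.comp t (differentiable_koranyiGauge₃ t :) :)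
  all_goals rw [X2_koranyiGauge]; fun_prop

theorem subLaplacian_koranyiGauge_rpow (p : ℝ) (h : 0 < koranyiGauge x₁ x₂ t) :
    subLaplacian (fun a b c => koranyiGauge a b c ^ p) x₁ x₂ t =
      8 * p * (2 * p + 1) * (x₁ ^ 2 + x₂ ^ 2) * koranyiGauge x₁ x₂ t ^ (p - 1) := by
  have hsplit : koranyiGauge x₁ x₂ t ^ (p - 1) =
      koranyiGauge x₁ x₂ t * koranyiGauge x₁ x₂ t ^ (p - 2) := by
    rw [show p - 1 = 1 + (p - 2) by ring, Real.rpow_add h, Real.rpow_one]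
  calc subLaplacian (fun a b c => koranyiGauge a b c ^ p) x₁ x₂ t
      = p * ((p - 1) * koranyiGauge x₁ x₂ t ^ (p - 2) *
          (X1 koranyiGauge x₁ x₂ t ^ 2 + X2 koranyiGauge x₁ x₂ t ^ 2) +
          koranyiGauge x₁ x₂ t ^ (p - 1) * 24 * (x₁ ^ 2 + x₂ ^ 2)) := by
        rw [subLaplacian, X1_X1_koranyiGauge_rpow p h, X2_X2_koranyiGauge_rpow p h,
          X1_X1_koranyiGauge, X2_X2_koranyiGauge]
        ring
    _ = _ := by
        rw [X1_koranyiGauge_sq_add_X2_koranyiGauge_sq, hsplit]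
        ring

end KoranyiGauge

/-- On ℍ¹, the function `u = ((x₁²+x₂²)² + t²)^{-1/2}` (the Korányi norm to the power
`2 - Q = -2`) satisfies the sub-Laplace equation `X₁²u + X₂²u = 0` away from the origin. -/
theorem stmt_5 (u : ℝ → ℝ → ℝ → ℝ)
    (hu : ∀ x₁ x₂ t, u x₁ x₂ t = ((x₁ ^ 2 + x₂ ^ 2) ^ 2 + t ^ 2) ^ (-(1 : ℝ) / 2))
    (x₁ x₂ t : ℝ) (h : ¬(x₁ = 0 ∧ x₂ = 0 ∧ t = 0)) :
    X1 (X1 u) x₁ x₂ t + X2 (X2 u) x₁ x₂ t = 0 := by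
  have hu' : u = fun a b c => koranyiGauge a b c ^ (-(1 : ℝ) / 2) := by
    funext a b c
    exact hu a b c
  change subLaplacian u x₁ x₂ t = 0
  rw [hu', subLaplacian_koranyiGauge_rpow _ (koranyiGauge_pos h)]
  norm_num
end

section
/- On ℍ¹ with X₁ = ∂_{x₁} + 2x₂ ∂_t and X₂ = ∂_{x₂} - 2x₁ ∂_t, the Korányi norm N(x₁,x₂,t) = ((x₁²+x₂²)²+t²)^{1/4} satisfies the horizontal ∞-Laplace equation ℒ_∞ N := (1/2)⟨∇₀(|∇₀N|₀²), ∇₀N⟩ = 0 at every point where x₁²+x₂² ≠ 0, where ∇₀f = (X₁f, X₂f) and ⟨(a,b),(c,d)⟩ = ac+bd. -/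
/-- The Korányi norm on ℍ¹. -/
noncomputable def KoranyiN : ℝ → ℝ → ℝ → ℝ :=
  fun x₁ x₂ t => ((x₁ ^ 2 + x₂ ^ 2) ^ 2 + t ^ 2) ^ ((1 : ℝ) / 4)

/-- The squared horizontal gradient norm `|∇₀N|₀² = (X₁N)² + (X₂N)²` of the Korányi norm. -/
noncomputable def G : ℝ → ℝ → ℝ → ℝ :=
  fun x₁ x₂ t => (X1 KoranyiN x₁ x₂ t) ^ 2 + (X2 KoranyiN x₁ x₂ t) ^ 2

open Filter Topology

section Congr

variable {f f' : ℝ → ℝ → ℝ → ℝ} {x₁ x₂ t : ℝ}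

lemma X1_congr_of_eventually_eq
    (hf : ∀ᶠ p : ℝ × ℝ × ℝ in 𝓝 (x₁, x₂, t), f p.1 p.2.1 p.2.2 = f' p.1 p.2.1 p.2.2) :
    X1 f x₁ x₂ t = X1 f' x₁ x₂ t := by
  have h₁ : (fun a => f a x₂ t) =ᶠ[𝓝 x₁] fun a => f' a x₂ t :=
    ((by fun_prop : Continuous fun a : ℝ => (a, x₂, t)).tendsto x₁).eventually hf
  have h₃ : (fun a => f x₁ x₂ a) =ᶠ[𝓝 t] fun a => f' x₁ x₂ a :=
    ((by fun_prop : Continuous fun a : ℝ => (x₁, x₂, a)).tendsto t).eventually hf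
  simp only [X1, h₁.deriv_eq, h₃.deriv_eq]

lemma X2_congr_of_eventually_eq
    (hf : ∀ᶠ p : ℝ × ℝ × ℝ in 𝓝 (x₁, x₂, t), f p.1 p.2.1 p.2.2 = f' p.1 p.2.1 p.2.2) :
    X2 f x₁ x₂ t = X2 f' x₁ x₂ t := by
  have h₂ : (fun a => f x₁ a t) =ᶠ[𝓝 x₂] fun a => f' x₁ a t :=
    ((by fun_prop : Continuous fun a : ℝ => (x₁, a, t)).tendsto x₂).eventually hf
  have h₃ : (fun a => f x₁ x₂ a) =ᶠ[𝓝 t] fun a => f' x₁ x₂ a :=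
    ((by fun_prop : Continuous fun a : ℝ => (x₁, x₂, a)).tendsto t).eventually hf
  simp only [X2, h₂.deriv_eq, h₃.deriv_eq]

end Congr

def radialLift (F : ℝ → ℝ → ℝ) : ℝ → ℝ → ℝ → ℝ :=
  fun x₁ x₂ t => F (x₁ ^ 2 + x₂ ^ 2) t

section RadialLift

variable {F H : ℝ → ℝ → ℝ} {x₁ x₂ t Fs Ft Hs Ht : ℝ}

lemma X1_radialLift (hs : HasDerivAt (fun s => F s t) Fs (x₁ ^ 2 + x₂ ^ 2))
    (ht : HasDerivAt (F (x₁ ^ 2 + x₂ ^ 2)) Ft t) :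
    X1 (radialLift F) x₁ x₂ t = 2 * x₁ * Fs + 2 * x₂ * Ft := by
  have h₁ : HasDerivAt (fun a => F (a ^ 2 + x₂ ^ 2) t) (Fs * (2 * x₁)) x₁ := by
    simpa [Function.comp_def] using hs.comp x₁ ((hasDerivAt_pow 2 x₁).add_const (x₂ ^ 2))
  simp only [X1, radialLift, h₁.deriv, ht.deriv]
  ring

lemma X2_radialLift (hs : HasDerivAt (fun s => F s t) Fs (x₁ ^ 2 + x₂ ^ 2))
    (ht : HasDerivAt (F (x₁ ^ 2 + x₂ ^ 2)) Ft t) :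
    X2 (radialLift F) x₁ x₂ t = 2 * x₂ * Fs - 2 * x₁ * Ft := by
  have h₂ : HasDerivAt (fun a => F (x₁ ^ 2 + a ^ 2) t) (Fs * (2 * x₂)) x₂ := by
    simpa [Function.comp_def] using hs.comp x₂ ((hasDerivAt_pow 2 x₂).const_add (x₁ ^ 2))
  simp only [X2, radialLift, h₂.deriv, ht.deriv]
  ring

lemma horizontal_inner_radialLift
    (hFs : HasDerivAt (fun s => F s t) Fs (x₁ ^ 2 + x₂ ^ 2))
    (hFt : HasDerivAt (F (x₁ ^ 2 + x₂ ^ 2)) Ft t)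
    (hHs : HasDerivAt (fun s => H s t) Hs (x₁ ^ 2 + x₂ ^ 2))
    (hHt : HasDerivAt (H (x₁ ^ 2 + x₂ ^ 2)) Ht t) :
    X1 (radialLift F) x₁ x₂ t * X1 (radialLift H) x₁ x₂ t
      + X2 (radialLift F) x₁ x₂ t * X2 (radialLift H) x₁ x₂ t
      = 4 * (x₁ ^ 2 + x₂ ^ 2) * (Fs * Hs + Ft * Ht) := by
  rw [X1_radialLift hFs hFt, X1_radialLift hHs hHt, X2_radialLift hFs hFt,
    X2_radialLift hHs hHt]
  ring

end RadialLift

lemma hasDerivAt_sq_add_rpow (c p : ℝ) {x : ℝ} (hx : x ^ 2 + c ≠ 0) :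
    HasDerivAt (fun a => (a ^ 2 + c) ^ p) (2 * p * x * (x ^ 2 + c) ^ (p - 1)) x := by
  convert ((hasDerivAt_pow 2 x).add_const c).rpow_const (p := p) (Or.inl hx) using 1
  simp only [Nat.cast_ofNat]
  ring

lemma hasDerivAt_add_sq_rpow (c p : ℝ) {x : ℝ} (hx : c + x ^ 2 ≠ 0) :
    HasDerivAt (fun a => (c + a ^ 2) ^ p) (2 * p * x * (c + x ^ 2) ^ (p - 1)) x := by
  simp only [add_comm c] at hx ⊢
  exact hasDerivAt_sq_add_rpow c p hx

noncomputable def koranyiProfile (s t : ℝ) : ℝ := (s ^ 2 + t ^ 2) ^ ((1 : ℝ) / 4)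

noncomputable def gradSqProfile (s t : ℝ) : ℝ := s * (s ^ 2 + t ^ 2) ^ (-(1 : ℝ) / 2)

lemma koranyiN_eq_radialLift : KoranyiN = radialLift koranyiProfile := rfl

section Profiles

variable {s t : ℝ}

lemma hasDerivAt_koranyiProfile_fst (hρ : s ^ 2 + t ^ 2 ≠ 0) :
    HasDerivAt (fun s => koranyiProfile s t) (s / 2 * (s ^ 2 + t ^ 2) ^ (-(3 : ℝ) / 4)) s := by
  refine (hasDerivAt_sq_add_rpow (t ^ 2) (1 / 4) hρ).congr_deriv ?_
  rw [show (1 : ℝ) / 4 - 1 = -3 / 4 by norm_num]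
  ring

lemma hasDerivAt_koranyiProfile_snd (hρ : s ^ 2 + t ^ 2 ≠ 0) :
    HasDerivAt (koranyiProfile s) (t / 2 * (s ^ 2 + t ^ 2) ^ (-(3 : ℝ) / 4)) t := by
  refine (hasDerivAt_add_sq_rpow (s ^ 2) (1 / 4) hρ).congr_deriv ?_
  rw [show (1 : ℝ) / 4 - 1 = -3 / 4 by norm_num]
  ring

lemma hasDerivAt_gradSqProfile_fst (hρ : s ^ 2 + t ^ 2 ≠ 0) :
    HasDerivAt (fun s => gradSqProfile s t) (t ^ 2 * (s ^ 2 + t ^ 2) ^ (-(3 : ℝ) / 2)) s := by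
  refine ((hasDerivAt_id s).mul (hasDerivAt_sq_add_rpow (t ^ 2) (-1 / 2) hρ)).congr_deriv ?_
  rw [show (-1 : ℝ) / 2 - 1 = -3 / 2 by norm_num,
    show (-1 : ℝ) / 2 = -3 / 2 + 1 by norm_num, Real.rpow_add_one hρ]
  simp only [id]
  ring

lemma hasDerivAt_gradSqProfile_snd (hρ : s ^ 2 + t ^ 2 ≠ 0) :
    HasDerivAt (gradSqProfile s) (-(s * t) * (s ^ 2 + t ^ 2) ^ (-(3 : ℝ) / 2)) t := by
  refine ((hasDerivAt_add_sq_rpow (s ^ 2) (-1 / 2) hρ).const_mul s).congr_deriv ?_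
  rw [show (-1 : ℝ) / 2 - 1 = -3 / 2 by norm_num]
  ring

end Profiles

lemma G_eq_radialLift_gradSqProfile {x₁ x₂ t : ℝ} (hρ : (x₁ ^ 2 + x₂ ^ 2) ^ 2 + t ^ 2 ≠ 0) :
    G x₁ x₂ t = radialLift gradSqProfile x₁ x₂ t := by
  have hN := horizontal_inner_radialLift (hasDerivAt_koranyiProfile_fst hρ)
    (hasDerivAt_koranyiProfile_snd hρ) (hasDerivAt_koranyiProfile_fst hρ)
    (hasDerivAt_koranyiProfile_snd hρ)
  have hG : G x₁ x₂ t = X1 KoranyiN x₁ x₂ t * X1 KoranyiN x₁ x₂ t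
      + X2 KoranyiN x₁ x₂ t * X2 KoranyiN x₁ x₂ t := by
    simp only [G, sq]
  rw [hG, koranyiN_eq_radialLift, hN]
  simp only [radialLift, gradSqProfile]
  set ρ := (x₁ ^ 2 + x₂ ^ 2) ^ 2 + t ^ 2
  have hpow : ρ ^ (-(3 : ℝ) / 4) * ρ ^ (-(3 : ℝ) / 4) * ρ = ρ ^ (-(1 : ℝ) / 2) := by
    rw [← Real.rpow_add (by positivity), ← Real.rpow_add_one hρ]
    norm_num
  rw [← hpow]
  ring

/-- The Korányi norm satisfies the horizontal ∞-Laplace equation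
`ℒ_∞ N = (1/2)⟨∇₀(|∇₀N|₀²), ∇₀N⟩ = 0` wherever `x₁² + x₂² ≠ 0`. -/
theorem stmt_6 (x₁ x₂ t : ℝ) (h : x₁ ^ 2 + x₂ ^ 2 ≠ 0) :
    (1 / 2) * (X1 G x₁ x₂ t * X1 KoranyiN x₁ x₂ t
      + X2 G x₁ x₂ t * X2 KoranyiN x₁ x₂ t) = 0 := by
  have hρ : (x₁ ^ 2 + x₂ ^ 2) ^ 2 + t ^ 2 ≠ 0 := by
    have := pow_pos (lt_of_le_of_ne (by positivity) h.symm) 2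
    positivity
  have hG : ∀ᶠ p : ℝ × ℝ × ℝ in 𝓝 (x₁, x₂, t),
      G p.1 p.2.1 p.2.2 = radialLift gradSqProfile p.1 p.2.1 p.2.2 :=
    ((by fun_prop : Continuous fun p : ℝ × ℝ × ℝ => (p.1 ^ 2 + p.2.1 ^ 2) ^ 2 + p.2.2 ^ 2)
      |>.continuousAt.eventually_ne hρ).mono fun p hp => G_eq_radialLift_gradSqProfile hp
  rw [X1_congr_of_eventually_eq hG, X2_congr_of_eventually_eq hG, koranyiN_eq_radialLift,
    horizontal_inner_radialLift (hasDerivAt_gradSqProfile_fst hρ)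
      (hasDerivAt_gradSqProfile_snd hρ) (hasDerivAt_koranyiProfile_fst hρ)
      (hasDerivAt_koranyiProfile_snd hρ)]
  ring
end

section
/- On ℍ¹, the sub-Laplacian of the Korányi norm satisfies ℒN := X₁²N + X₂²N = 3·|∇₀N|₀²/N at every point where x₁²+x₂² ≠ 0. (Here 3 = Q-1 with Q = 4 the homogeneous dimension.) -/
open Filter Topology

section HorizontalFields

variable {f g : ℝ → ℝ → ℝ → ℝ} {x₁ x₂ t d₁ d₂ d₃ : ℝ}

theorem X1_eq_of_hasDerivAt (h₁ : HasDerivAt (fun a => f a x₂ t) d₁ x₁)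
    (h₃ : HasDerivAt (fun c => f x₁ x₂ c) d₃ t) : X1 f x₁ x₂ t = d₁ + 2 * x₂ * d₃ := by
  rw [X1, h₁.deriv, h₃.deriv]

theorem X2_eq_of_hasDerivAt (h₂ : HasDerivAt (fun b => f x₁ b t) d₂ x₂)
    (h₃ : HasDerivAt (fun c => f x₁ x₂ c) d₃ t) : X2 f x₁ x₂ t = d₂ - 2 * x₁ * d₃ := by
  rw [X2, h₂.deriv, h₃.deriv]

theorem X1_congr_s8 (h : ∀ᶠ p in 𝓝 (x₁, x₂, t), f p.1 p.2.1 p.2.2 = g p.1 p.2.1 p.2.2) :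
    X1 f x₁ x₂ t = X1 g x₁ x₂ t := by
  have line₁ : Tendsto (fun a => (a, x₂, t)) (𝓝 x₁) (𝓝 (x₁, x₂, t)) :=
    (by fun_prop : Continuous fun a : ℝ => (a, x₂, t)).tendsto x₁
  have line₃ : Tendsto (fun c => (x₁, x₂, c)) (𝓝 t) (𝓝 (x₁, x₂, t)) :=
    (by fun_prop : Continuous fun c : ℝ => (x₁, x₂, c)).tendsto t
  have e₁ : (fun a => f a x₂ t) =ᶠ[𝓝 x₁] fun a => g a x₂ t := line₁.eventually h
  have e₃ : (fun c => f x₁ x₂ c) =ᶠ[𝓝 t] fun c => g x₁ x₂ c := line₃.eventually h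
  rw [X1, X1, e₁.deriv_eq, e₃.deriv_eq]

theorem X2_congr_s8 (h : ∀ᶠ p in 𝓝 (x₁, x₂, t), f p.1 p.2.1 p.2.2 = g p.1 p.2.1 p.2.2) :
    X2 f x₁ x₂ t = X2 g x₁ x₂ t := by
  have line₂ : Tendsto (fun b => (x₁, b, t)) (𝓝 x₂) (𝓝 (x₁, x₂, t)) :=
    (by fun_prop : Continuous fun b : ℝ => (x₁, b, t)).tendsto x₂
  have line₃ : Tendsto (fun c => (x₁, x₂, c)) (𝓝 t) (𝓝 (x₁, x₂, t)) :=
    (by fun_prop : Continuous fun c : ℝ => (x₁, x₂, c)).tendsto t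
  have e₂ : (fun b => f x₁ b t) =ᶠ[𝓝 x₂] fun b => g x₁ b t := line₂.eventually h
  have e₃ : (fun c => f x₁ x₂ c) =ᶠ[𝓝 t] fun c => g x₁ x₂ c := line₃.eventually h
  rw [X2, X2, e₂.deriv_eq, e₃.deriv_eq]

end HorizontalFields

theorem HasDerivAt.rpow_one_div_four {g : ℝ → ℝ} {d s : ℝ} (hg : HasDerivAt g d s) (hs : 0 < g s) :
    HasDerivAt (fun y => g y ^ (1 / 4 : ℝ)) (d / (4 * (g s ^ (1 / 4 : ℝ)) ^ 3)) s := by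
  refine (hg.rpow_const (Or.inl hs.ne')).congr_deriv ?_
  have hroot : (g s ^ (1 / 4 : ℝ)) ^ 4 = g s := by
    rw [one_div]; exact Real.rpow_inv_natCast_pow hs.le four_ne_zero
  have hroot_pos : 0 < g s ^ (1 / 4 : ℝ) := Real.rpow_pos_of_pos hs _
  rw [Real.rpow_sub_one hs.ne']
  nth_rw 2 [← hroot]
  field_simp

section Koranyi

variable {x₁ x₂ t : ℝ}

theorem pos_of_koranyiN_ne_zero (hN : KoranyiN x₁ x₂ t ≠ 0) : 0 < (x₁ ^ 2 + x₂ ^ 2) ^ 2 + t ^ 2 := by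
  refine lt_of_le_of_ne (by positivity) fun h => hN ?_
  rw [KoranyiN, ← h, Real.zero_rpow (by norm_num)]

theorem koranyiN_pow_four (x₁ x₂ t : ℝ) : KoranyiN x₁ x₂ t ^ 4 = (x₁ ^ 2 + x₂ ^ 2) ^ 2 + t ^ 2 := by
  rw [KoranyiN, one_div]
  exact Real.rpow_inv_natCast_pow (by positivity) four_ne_zero

theorem koranyiN_pos (h : x₁ ^ 2 + x₂ ^ 2 ≠ 0) : 0 < KoranyiN x₁ x₂ t :=
  Real.rpow_pos_of_pos (add_pos_of_pos_of_nonneg (pow_pos (h.symm.lt_of_le (by positivity)) 2)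
    (sq_nonneg t)) _

theorem continuous_koranyiN : Continuous fun p : ℝ × ℝ × ℝ => KoranyiN p.1 p.2.1 p.2.2 := by
  unfold KoranyiN
  fun_prop (disch := norm_num)

theorem eventually_koranyiN_ne_zero (hN : KoranyiN x₁ x₂ t ≠ 0) :
    ∀ᶠ p in 𝓝 (x₁, x₂, t), KoranyiN p.1 p.2.1 p.2.2 ≠ 0 :=
  continuous_koranyiN.continuousAt.eventually_ne hN

theorem hasDerivAt_koranyiN_x₁ (hN : KoranyiN x₁ x₂ t ≠ 0) :
    HasDerivAt (fun a => KoranyiN a x₂ t) (x₁ * (x₁ ^ 2 + x₂ ^ 2) / KoranyiN x₁ x₂ t ^ 3) x₁ := by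
  have := ((((hasDerivAt_pow 2 x₁).add_const (x₂ ^ 2)).fun_pow 2).add_const (t ^ 2)).rpow_one_div_four
    (pos_of_koranyiN_ne_zero hN)
  exact this.congr_deriv (by rw [KoranyiN]; ring)

theorem hasDerivAt_koranyiN_x₂ (hN : KoranyiN x₁ x₂ t ≠ 0) :
    HasDerivAt (fun b => KoranyiN x₁ b t) (x₂ * (x₁ ^ 2 + x₂ ^ 2) / KoranyiN x₁ x₂ t ^ 3) x₂ := by
  have := ((((hasDerivAt_pow 2 x₂).const_add (x₁ ^ 2)).fun_pow 2).add_const (t ^ 2)).rpow_one_div_four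
    (pos_of_koranyiN_ne_zero hN)
  exact this.congr_deriv (by rw [KoranyiN]; ring)

theorem hasDerivAt_koranyiN_t (hN : KoranyiN x₁ x₂ t ≠ 0) :
    HasDerivAt (fun c => KoranyiN x₁ x₂ c) (t / (2 * KoranyiN x₁ x₂ t ^ 3)) t := by
  have := ((hasDerivAt_pow 2 t).const_add ((x₁ ^ 2 + x₂ ^ 2) ^ 2)).rpow_one_div_four
    (pos_of_koranyiN_ne_zero hN)
  exact this.congr_deriv (by rw [KoranyiN]; ring)

theorem X1_koranyiN (hN : KoranyiN x₁ x₂ t ≠ 0) :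
    X1 KoranyiN x₁ x₂ t = (x₁ * (x₁ ^ 2 + x₂ ^ 2) + x₂ * t) / KoranyiN x₁ x₂ t ^ 3 := by
  rw [X1_eq_of_hasDerivAt (hasDerivAt_koranyiN_x₁ hN) (hasDerivAt_koranyiN_t hN)]
  field_simp

theorem X2_koranyiN (hN : KoranyiN x₁ x₂ t ≠ 0) :
    X2 KoranyiN x₁ x₂ t = (x₂ * (x₁ ^ 2 + x₂ ^ 2) - x₁ * t) / KoranyiN x₁ x₂ t ^ 3 := by
  rw [X2_eq_of_hasDerivAt (hasDerivAt_koranyiN_x₂ hN) (hasDerivAt_koranyiN_t hN)]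
  field_simp

theorem X1_X1_koranyiN (hN : KoranyiN x₁ x₂ t ≠ 0) :
    X1 (X1 KoranyiN) x₁ x₂ t = 3 * (x₁ ^ 2 + x₂ ^ 2) / KoranyiN x₁ x₂ t ^ 3
      - 3 * (x₁ * (x₁ ^ 2 + x₂ ^ 2) + x₂ * t) ^ 2 / KoranyiN x₁ x₂ t ^ 7 := by
  rw [X1_congr_s8 (g := fun a b c => (a * (a ^ 2 + b ^ 2) + b * c) / KoranyiN a b c ^ 3)
    ((eventually_koranyiN_ne_zero hN).mono fun p hp => X1_koranyiN hp)]
  have hA₁ : HasDerivAt (fun a => a * (a ^ 2 + x₂ ^ 2) + x₂ * t) (3 * x₁ ^ 2 + x₂ ^ 2) x₁ :=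
    (((hasDerivAt_id' x₁).mul ((hasDerivAt_pow 2 x₁).add_const _)).add_const _).congr_deriv
      (by push_cast; ring)
  have hA₃ : HasDerivAt (fun c => x₁ * (x₁ ^ 2 + x₂ ^ 2) + x₂ * c) x₂ t :=
    (((hasDerivAt_id' t).const_mul x₂).const_add _).congr_deriv (by simp)
  have hN3 := pow_ne_zero 3 hN
  rw [X1_eq_of_hasDerivAt (hA₁.div ((hasDerivAt_koranyiN_x₁ hN).fun_pow 3) hN3)
    (hA₃.div ((hasDerivAt_koranyiN_t hN).fun_pow 3) hN3)]
  field_simp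
  ring

theorem X2_X2_koranyiN (hN : KoranyiN x₁ x₂ t ≠ 0) :
    X2 (X2 KoranyiN) x₁ x₂ t = 3 * (x₁ ^ 2 + x₂ ^ 2) / KoranyiN x₁ x₂ t ^ 3
      - 3 * (x₂ * (x₁ ^ 2 + x₂ ^ 2) - x₁ * t) ^ 2 / KoranyiN x₁ x₂ t ^ 7 := by
  rw [X2_congr_s8 (g := fun a b c => (b * (a ^ 2 + b ^ 2) - a * c) / KoranyiN a b c ^ 3)
    ((eventually_koranyiN_ne_zero hN).mono fun p hp => X2_koranyiN hp)]
  have hB₂ : HasDerivAt (fun b => b * (x₁ ^ 2 + b ^ 2) - x₁ * t) (x₁ ^ 2 + 3 * x₂ ^ 2) x₂ :=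
    (((hasDerivAt_id' x₂).mul ((hasDerivAt_pow 2 x₂).const_add _)).sub_const _).congr_deriv
      (by push_cast; ring)
  have hB₃ : HasDerivAt (fun c => x₂ * (x₁ ^ 2 + x₂ ^ 2) - x₁ * c) (-x₁) t :=
    (((hasDerivAt_id' t).const_mul x₁).const_sub _).congr_deriv (by simp)
  have hN3 := pow_ne_zero 3 hN
  rw [X2_eq_of_hasDerivAt (hB₂.div ((hasDerivAt_koranyiN_x₂ hN).fun_pow 3) hN3)
    (hB₃.div ((hasDerivAt_koranyiN_t hN).fun_pow 3) hN3)]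
  field_simp
  ring

end Koranyi

/-- On ℍ¹, the sub-Laplacian of the Korányi norm satisfies
`ℒN = X₁²N + X₂²N = 3 |∇₀N|₀² / N` wherever `x₁² + x₂² ≠ 0` (here `3 = Q - 1`, `Q = 4`). -/
theorem stmt_8 (x₁ x₂ t : ℝ) (h : x₁ ^ 2 + x₂ ^ 2 ≠ 0) :
    X1 (X1 KoranyiN) x₁ x₂ t + X2 (X2 KoranyiN) x₁ x₂ t
      = 3 * ((X1 KoranyiN x₁ x₂ t) ^ 2 + (X2 KoranyiN x₁ x₂ t) ^ 2)
        / KoranyiN x₁ x₂ t := by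
  have hN : KoranyiN x₁ x₂ t ≠ 0 := (koranyiN_pos h).ne'
  have hgrad : (x₁ * (x₁ ^ 2 + x₂ ^ 2) + x₂ * t) ^ 2 + (x₂ * (x₁ ^ 2 + x₂ ^ 2) - x₁ * t) ^ 2
      = (x₁ ^ 2 + x₂ ^ 2) * KoranyiN x₁ x₂ t ^ 4 := by
    rw [koranyiN_pow_four]
    ring
  rw [X1_X1_koranyiN hN, X2_X2_koranyiN hN, X1_koranyiN hN, X2_koranyiN hN]
  field_simp
  linear_combination (-2) * hgrad
end

section
/- Let Q be a real number, Ω ⊆ ℝ^m open, and N: Ω → ℝ a positive C² function with nonvanishing gradient. If div(N·∇N/|∇N|²) = Q on Ω and ΔN = (Q-1)|∇N|²/N on Ω, then the ∞-Laplacian Δ_∞ N := (1/2)⟨∇(|∇N|²), ∇N⟩ vanishes identically on Ω. -/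
open scoped RealInnerProductSpace

/-!
Expanding the divergence by the product and quotient rules gives
`div(N ∇N/|∇N|²) = (N/|∇N|²) ΔN + 1 - 2 N Δ_∞N/|∇N|⁴`.
With `ΔN = (Q-1)|∇N|²/N` the first two terms already add up to `Q`, so the last one vanishes,
and `N ≠ 0 ≠ ∇N` forces `Δ_∞N = 0`.
-/

theorem HasFDerivAt.real_div {E : Type*} [NormedAddCommGroup E] [NormedSpace ℝ E]
    {c d : E → ℝ} {c' d' : E →L[ℝ] ℝ} {x : E}
    (hc : HasFDerivAt c c' x) (hd : HasFDerivAt d d' x) (hx : d x ≠ 0) :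
    HasFDerivAt (fun y => c y / d y) ((d x ^ 2)⁻¹ • (d x • c' - c x • d')) x := by
  have hinv : HasFDerivAt (fun y => (d y)⁻¹) (-(d x ^ 2)⁻¹ • d') x :=
    (hasDerivAt_inv hx).comp_hasFDerivAt x hd
  refine (hc.mul hinv).congr_fderiv ?_
  ext v
  simp only [add_apply, smul_apply, sub_apply, smul_eq_mul]
  field_simp
  ring

theorem inner_gradient_div {E : Type*} [NormedAddCommGroup E] [InnerProductSpace ℝ E]
    [CompleteSpace E] {c d : E → ℝ} {x : E} (hc : DifferentiableAt ℝ c x)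
    (hd : DifferentiableAt ℝ d x) (hx : d x ≠ 0) (v : E) :
    ⟪gradient (fun y => c y / d y) x, v⟫ =
      (⟪gradient c x, v⟫ * d x - c x * ⟪gradient d x, v⟫) / d x ^ 2 := by
  rw [inner_gradient_left, inner_gradient_left, inner_gradient_left,
    (hc.hasFDerivAt.real_div hd.hasFDerivAt hx).fderiv]
  simp only [smul_apply, sub_apply, smul_eq_mul]
  ring

section Divergence

variable {ι : Type*} [Fintype ι] [DecidableEq ι]

noncomputable def divergence (V : EuclideanSpace ℝ ι → EuclideanSpace ℝ ι)
    (x : EuclideanSpace ℝ ι) : ℝ :=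
  ∑ j, fderiv ℝ V x (EuclideanSpace.single j 1) j

noncomputable def infLaplacian (N : EuclideanSpace ℝ ι → ℝ) (x : EuclideanSpace ℝ ι) : ℝ :=
  (1 / 2) * ⟪gradient (fun y => ‖gradient N y‖ ^ 2) x, gradient N x⟫

theorem fderiv_single_eq_gradient_apply (f : EuclideanSpace ℝ ι → ℝ) (x : EuclideanSpace ℝ ι)
    (j : ι) : fderiv ℝ f x (EuclideanSpace.single j 1) = gradient f x j := by
  rw [← inner_gradient_left, EuclideanSpace.inner_single_right]
  simp

theorem divergence_smul {f : EuclideanSpace ℝ ι → ℝ} {V : EuclideanSpace ℝ ι → EuclideanSpace ℝ ι}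
    {x : EuclideanSpace ℝ ι} (hf : DifferentiableAt ℝ f x) (hV : DifferentiableAt ℝ V x) :
    divergence (fun y => f y • V y) x = ⟪gradient f x, V x⟫ + f x * divergence V x := by
  rw [real_inner_comm]
  simp only [divergence, fderiv_fun_smul hf hV, add_apply, smul_apply,
    ContinuousLinearMap.smulRight_apply, fderiv_single_eq_gradient_apply, PiLp.add_apply, PiLp.smul_apply, smul_eq_mul,
    Finset.sum_add_distrib, ← Finset.mul_sum, PiLp.inner_apply, RCLike.inner_apply, conj_trivial]
  ring

theorem divergence_div_normSq_smul_gradient {N : EuclideanSpace ℝ ι → ℝ} {x : EuclideanSpace ℝ ι}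
    (hN : DifferentiableAt ℝ N x) (hgrad : DifferentiableAt ℝ (gradient N) x)
    (hx : gradient N x ≠ 0) :
    divergence (fun y => (N y / ‖gradient N y‖ ^ 2) • gradient N y) x =
      N x / ‖gradient N x‖ ^ 2 * divergence (gradient N) x + 1
        - 2 * N x * infLaplacian N x / ‖gradient N x‖ ^ 4 := by
  have hnormSq : ‖gradient N x‖ ^ 2 ≠ 0 := pow_ne_zero 2 (norm_ne_zero_iff.mpr hx)
  have hquot := hN.hasFDerivAt.real_div (hgrad.norm_sq ℝ).hasFDerivAt hnormSq
  rw [divergence_smul hquot.differentiableAt hgrad,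
    inner_gradient_div hN (hgrad.norm_sq ℝ) hnormSq, real_inner_self_eq_norm_sq,
    infLaplacian]
  field_simp
  ring

end Divergence

theorem ContDiffOn.differentiableAt_gradient {E : Type*} [NormedAddCommGroup E]
    [InnerProductSpace ℝ E] [CompleteSpace E] {n : WithTop ℕ∞} {f : E → ℝ} {s : Set E}
    (hf : ContDiffOn ℝ n f s) (hs : IsOpen s) (hn : 2 ≤ n) {x : E} (hx : x ∈ s) :
    DifferentiableAt ℝ (gradient f) x := by
  have hfderiv : ContDiffOn ℝ 1 (fderiv ℝ f) s :=
    hf.fderiv_of_isOpen hs (by simpa [one_add_one_eq_two] using hn)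
  exact ((InnerProductSpace.toDual ℝ E).symm.contDiff.comp_contDiffOn hfderiv
    |>.differentiableOn one_ne_zero).differentiableAt (hs.mem_nhds hx)

/-- If `N` is a positive `C³` function with nonvanishing gradient on an open `Ω ⊆ ℝ^m`
satisfying `div(N ∇N/|∇N|²) = Q` and `ΔN = (Q-1)|∇N|²/N` on `Ω`, then the ∞-Laplacian
`Δ_∞ N = (1/2)⟨∇(|∇N|²), ∇N⟩` vanishes on `Ω`. -/
theorem stmt_10 (m : ℕ) (Q : ℝ)
    (Ω : Set (EuclideanSpace ℝ (Fin m))) (hΩ : IsOpen Ω)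
    (N : EuclideanSpace ℝ (Fin m) → ℝ)
    (hN : ContDiffOn ℝ 3 N Ω)
    (hpos : ∀ x ∈ Ω, 0 < N x)
    (hgrad : ∀ x ∈ Ω, gradient N x ≠ 0)
    (hdiv : ∀ x ∈ Ω,
      ∑ j : Fin m,
        fderiv ℝ (fun y => (N y / ‖gradient N y‖ ^ 2) • gradient N y) x
          (EuclideanSpace.single j 1) j = Q)
    (hlap : ∀ x ∈ Ω,
      ∑ j : Fin m,
        fderiv ℝ (fun y => gradient N y) x (EuclideanSpace.single j 1) j
        = (Q - 1) * ‖gradient N x‖ ^ 2 / N x) :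
    ∀ x ∈ Ω,
      (1 / 2) * ⟪gradient (fun y => ‖gradient N y‖ ^ 2) x, gradient N x⟫ = 0 := by
  intro x hx
  have hNx : N x ≠ 0 := (hpos x hx).ne'
  have hnorm : ‖gradient N x‖ ≠ 0 := norm_ne_zero_iff.mpr (hgrad x hx)
  have hdiv' : divergence (fun y => (N y / ‖gradient N y‖ ^ 2) • gradient N y) x = Q :=
    hdiv x hx
  have hlap' : divergence (gradient N) x = (Q - 1) * ‖gradient N x‖ ^ 2 / N x := hlap x hx
  have hexpand := divergence_div_normSq_smul_gradient
    ((hN.differentiableOn (by norm_num)).differentiableAt (hΩ.mem_nhds hx))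
    (hN.differentiableAt_gradient hΩ (by norm_num) hx) (hgrad x hx)
  rw [hdiv', hlap'] at hexpand
  have hvanish : N x * infLaplacian N x = 0 := by
    field_simp at hexpand
    linarith
  exact (mul_eq_zero.mp hvanish).resolve_left hNx
end
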